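/- Let a > 0 and r₂ > 0, and define f : [0,∞) → [0,∞) by f(r) = a⁻¹(1 − e^{−ar}) for 0 ≤ r ≤ r₂ and f(r) = a⁻¹(1 − e^{−a r₂}) + (2r₂)⁻¹ e^{−a r₂} (r² − r₂²) for r > r₂. Then for all t, s ≥ 0: f(t) − f(s) ≤ ( r₂⁻¹ e^{−a r₂} max(t,s) + 1 ) |t − s|. -/

import Mathlib

open Real

noncomputable section

/-- The concave-then-quadratic modified distance function used in reflection-coupling
arguments: `f(r) = a⁻¹(1 − e^{−ar})` for `r ≤ r₂` and
`f(r) = a⁻¹(1 − e^{−a r₂}) + (2r₂)⁻¹ e^{−a r₂}(r² − r₂²)` for `r > r₂`. -/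
def modDist (a r₂ r : ℝ) : ℝ :=
  if r ≤ r₂ then a⁻¹ * (1 - Real.exp (-(a * r)))
  else a⁻¹ * (1 - Real.exp (-(a * r₂))) + (2 * r₂)⁻¹ * Real.exp (-(a * r₂)) * (r ^ 2 - r₂ ^ 2)

lemma exp_neg_sub_exp_neg_le {x y : ℝ} (hx : 0 ≤ x) (hxy : x ≤ y) :
    Real.exp (-x) - Real.exp (-y) ≤ y - x := by
  have h1 : Real.exp (-x) ≤ 1 := Real.exp_le_one_iff.mpr (by linarith)
  have h2 : Real.exp (-x) > 0 := Real.exp_pos _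
  have h3 : (x - y) + 1 ≤ Real.exp (x - y) := Real.add_one_le_exp _
  have h4 : Real.exp (-y) = Real.exp (-x) * Real.exp (x - y) := by
    rw [← Real.exp_add]; ring_nf
  nlinarith

lemma modDist_mono (a r₂ : ℝ) (ha : 0 < a) (hr₂ : 0 < r₂) {s t : ℝ}
    (hs : 0 ≤ s) (hst : s ≤ t) : modDist a r₂ s ≤ modDist a r₂ t := by
  have hE : 0 < Real.exp (-(a * r₂)) := Real.exp_pos _
  unfold modDist
  by_cases htr : t ≤ r₂
  · rw [if_pos (le_trans hst htr), if_pos htr]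
    have : Real.exp (-(a * t)) ≤ Real.exp (-(a * s)) := by
      apply Real.exp_le_exp.mpr; nlinarith
    have ha' : 0 ≤ a⁻¹ := by positivity
    nlinarith
  · push_neg at htr
    rw [if_neg (not_le.mpr htr)]
    by_cases hsr : s ≤ r₂
    · rw [if_pos hsr]
      have h1 : Real.exp (-(a * r₂)) ≤ Real.exp (-(a * s)) := by
        apply Real.exp_le_exp.mpr; nlinarith
      have h2 : 0 ≤ (2 * r₂)⁻¹ * Real.exp (-(a * r₂)) * (t ^ 2 - r₂ ^ 2) := by
        have h : r₂ ^ 2 ≤ t ^ 2 := by nlinarith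
        exact mul_nonneg (mul_nonneg (by positivity) hE.le) (by linarith)
      have ha' : 0 ≤ a⁻¹ := by positivity
      nlinarith
    · push_neg at hsr
      rw [if_neg (not_le.mpr hsr)]
      have h : s ^ 2 ≤ t ^ 2 := by nlinarith
      have h0 : 0 ≤ (2 * r₂)⁻¹ * Real.exp (-(a * r₂)) := by positivity
      nlinarith [mul_le_mul_of_nonneg_left h h0]

lemma modDist_key (a r₂ : ℝ) (ha : 0 < a) (hr₂ : 0 < r₂) {s t : ℝ}
    (hs : 0 ≤ s) (hst : s ≤ t) :
    modDist a r₂ t - modDist a r₂ s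
      ≤ (r₂⁻¹ * Real.exp (-(a * r₂)) * t + 1) * (t - s) := by
  have hE : 0 < Real.exp (-(a * r₂)) := Real.exp_pos _
  have ht : 0 ≤ t := le_trans hs hst
  have hc : 0 ≤ r₂⁻¹ * Real.exp (-(a * r₂)) * t := by positivity
  unfold modDist
  by_cases htr : t ≤ r₂
  · rw [if_pos (le_trans hst htr), if_pos htr]
    have key : Real.exp (-(a * s)) - Real.exp (-(a * t)) ≤ a * t - a * s := by
      have := exp_neg_sub_exp_neg_le (x := a * s) (y := a * t) (by positivity)
        (by nlinarith)
      linarith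
    have ha' : 0 < a⁻¹ := by positivity
    have h2 : a⁻¹ * (Real.exp (-(a * s)) - Real.exp (-(a * t))) ≤ t - s := by
      calc a⁻¹ * (Real.exp (-(a * s)) - Real.exp (-(a * t)))
          ≤ a⁻¹ * (a * t - a * s) := by nlinarith
        _ = t - s := by field_simp
    nlinarith
  · push_neg at htr
    rw [if_neg (not_le.mpr htr)]
    have hr₂' : 0 < (2 * r₂)⁻¹ := by positivity
    have hquad : (2 * r₂)⁻¹ * Real.exp (-(a * r₂)) * (2 * t * r₂)
        = Real.exp (-(a * r₂)) * t := by
      field_simp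
    by_cases hsr : s ≤ r₂
    · rw [if_pos hsr]
      -- f t - f s = a⁻¹(e^{-as} - e^{-ar₂}) + (2r₂)⁻¹ E (t²-r₂²)
      have key : Real.exp (-(a * s)) - Real.exp (-(a * r₂)) ≤ a * r₂ - a * s := by
        have := exp_neg_sub_exp_neg_le (x := a * s) (y := a * r₂) (by positivity)
          (by nlinarith)
        linarith
      have ha' : 0 < a⁻¹ := by positivity
      have h1 : a⁻¹ * (Real.exp (-(a * s)) - Real.exp (-(a * r₂))) ≤ r₂ - s := by
        calc a⁻¹ * (Real.exp (-(a * s)) - Real.exp (-(a * r₂)))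
            ≤ a⁻¹ * (a * r₂ - a * s) := by nlinarith
          _ = r₂ - s := by field_simp
      have h2 : (2 * r₂)⁻¹ * Real.exp (-(a * r₂)) * (t ^ 2 - r₂ ^ 2)
          ≤ r₂⁻¹ * Real.exp (-(a * r₂)) * t * (t - s) := by
        have hfact : t ^ 2 - r₂ ^ 2 ≤ 2 * t * (t - s) := by nlinarith
        have heq : r₂⁻¹ * Real.exp (-(a * r₂)) * t * (t - s)
            = (2 * r₂)⁻¹ * Real.exp (-(a * r₂)) * (2 * t * (t - s)) := by
          field_simp
        rw [heq]
        have h0 : 0 ≤ (2 * r₂)⁻¹ * Real.exp (-(a * r₂)) := by positivity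
        exact mul_le_mul_of_nonneg_left hfact h0
      nlinarith
    · push_neg at hsr
      rw [if_neg (not_le.mpr hsr)]
      have hfact : t ^ 2 - s ^ 2 ≤ 2 * t * (t - s) := by nlinarith
      have heq : r₂⁻¹ * Real.exp (-(a * r₂)) * t * (t - s)
          = (2 * r₂)⁻¹ * Real.exp (-(a * r₂)) * (2 * t * (t - s)) := by
        field_simp
      nlinarith [mul_le_mul_of_nonneg_left hfact (le_of_lt (mul_pos hr₂' hE))]

/-- Stability bound for the modified distance function:
`f(t) − f(s) ≤ (r₂⁻¹ e^{−a r₂} max(t,s) + 1)|t − s|` for all `t, s ≥ 0`. -/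
theorem modDist_stability (a r₂ : ℝ) (ha : 0 < a) (hr₂ : 0 < r₂) :
    ∀ t s : ℝ, 0 ≤ t → 0 ≤ s →
      modDist a r₂ t - modDist a r₂ s
        ≤ (r₂⁻¹ * Real.exp (-(a * r₂)) * max t s + 1) * |t - s| := by
  intro t s ht hs
  rcases le_total s t with h | h
  · rw [max_eq_left h, abs_of_nonneg (by linarith)]
    exact modDist_key a r₂ ha hr₂ hs h
  · have h1 : modDist a r₂ t - modDist a r₂ s ≤ 0 := by
      have := modDist_mono a r₂ ha hr₂ ht h
      linarith
    have h2 : 0 ≤ (r₂⁻¹ * Real.exp (-(a * r₂)) * max t s + 1) * |t - s| := by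
      have : 0 ≤ max t s := le_max_of_le_left ht
      positivity
    linarith

end
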